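/- (Normalizing converter nbe from lambda terms to compact terms.) There is a function which, for every formula F, maps every closed intrinsically typed lambda term of type ND [] F to a compact term of the exp-log normal form of F, i.e., a function nbe : ND [] F → HSc (enf2cnf (enf F)), where enf2cnf coerces an ENF to a CNF (the identity on cnf c, and con top (bd d) top on dnf d). -/

import Mathlib

namespace ExpLog

-- Formulas (types) generated by atoms, sums, products and arrows.
inductive Formula : Type
  | prop : ℕ → Formula
  | disj : Formula → Formula → Formula
  | conj : Formula → Formula → Formula
  | impl : Formula → Formula → Formula
  deriving Repr
-- Intrinsically typed lambda terms (natural deduction proofs) with de Bruijn indices.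
inductive ND : List Formula → Formula → Type
  | hyp  {Γ A} : ND (A :: Γ) A
  | wkn  {Γ A B} : ND Γ A → ND (B :: Γ) A
  | lam  {Γ A B} : ND (A :: Γ) B → ND Γ (.impl A B)
  | app  {Γ A B} : ND Γ (.impl A B) → ND Γ A → ND Γ B
  | pair {Γ A B} : ND Γ A → ND Γ B → ND Γ (.conj A B)
  | fst  {Γ A B} : ND Γ (.conj A B) → ND Γ A
  | snd  {Γ A B} : ND Γ (.conj A B) → ND Γ B
  | inl  {Γ A B} : ND Γ A → ND Γ (.disj A B)
  | inr  {Γ A B} : ND Γ B → ND Γ (.disj A B)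
  | cas  {Γ A B C} : ND Γ (.disj A B) → ND (A :: Γ) C → ND (B :: Γ) C → ND Γ C
-- The mutually inductive grammar of exp-log normal forms:
-- conjunctive normal forms (CNF), disjunctive normal forms (DNF), and base types.
mutual
inductive CNF : Type
  | top : CNF
  | con : CNF → Base → CNF → CNF
  deriving Repr

inductive DNF : Type
  | two : CNF → CNF → DNF
  | dis : CNF → DNF → DNF
  deriving Repr

inductive Base : Type
  | prp : ℕ → Base
  | bd  : DNF → Base
  deriving Repr
end

/-- Exp-log normal forms: either a CNF or a DNF. -/
inductive ENF : Type
  | cnf : CNF → ENF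
  | dnf : DNF → ENF
  deriving Repr

/-- Flattening of `+`-associativity (auxiliary). -/
def nplus1 : DNF → ENF → DNF
  | .two c c0, .cnf c1 => .dis c (.two c0 c1)
  | .two c c0, .dnf d0 => .dis c (.dis c0 d0)
  | .dis c d0, e2 => .dis c (nplus1 d0 e2)

/-- Flattened n-ary sum of two ENFs. -/
def nplus : ENF → ENF → DNF
  | .cnf a, .cnf c => .two a c
  | .cnf a, .dnf d => .dis a d
  | .dnf b, e2 => nplus1 b e2

/-- Flattened n-ary product of two CNFs. -/
def ntimes : CNF → CNF → CNF
  | .top, c2 => c2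
  | .con c10 d c13, c2 => .con c10 d (ntimes c13 c2)

/-- Distributivity of a CNF over a DNF. -/
def distrib0 : CNF → DNF → ENF
  | c, .two c0 c1 => .dnf (.two (ntimes c c0) (ntimes c c1))
  | c, .dis c0 d0 =>
      .dnf (match distrib0 c d0 with
            | .cnf c1 => .two (ntimes c c0) c1
            | .dnf d1 => .dis (ntimes c c0) d1)

/-- Distributivity of a CNF over an ENF. -/
def distrib1 : CNF → ENF → ENF
  | c, .cnf a => .cnf (ntimes c a)
  | c, .dnf b => distrib0 c b

/-- The exp-log rewriting `b^(c₁+⋯+cₙ) ⇝ b^c₁ ⋯ b^cₙ`. -/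
def explog0 : Base → DNF → CNF
  | b, .two c1 c2 => ntimes (.con c1 b .top) (.con c2 b .top)
  | b, .dis c d3 => ntimes (.con c b .top) (explog0 b d3)

/-- The exp-log rewriting of `b^e` for an ENF exponent `e`. -/
def explog1 : Base → ENF → CNF
  | d, .cnf c => .con c d .top
  | d, .dnf d1 => explog0 d d1

/-- Distributivity of a DNF over an ENF. -/
def distribn : DNF → ENF → ENF
  | .two c c0, e2 => .dnf (nplus (distrib1 c e2) (distrib1 c0 e2))
  | .dis c d0, e2 => .dnf (nplus (distrib1 c e2) (distribn d0 e2))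

/-- Distributivity of an ENF over an ENF. -/
def distrib : ENF → ENF → ENF
  | .cnf a, e2 => distrib1 a e2
  | .dnf b, e2 => distribn b e2

/-- The exp-log rewriting of `c^{e₂}` (pointwise currying). -/
def explogn : CNF → ENF → CNF
  | .top, _ => .top
  | .con c1 d c2, e2 => ntimes (explog1 d (distrib1 c1 e2)) (explogn c2 e2)

/-- The CNF corresponding to an atomic type: `(1→p)×1`, identified with `p`. -/
def p2c (p : ℕ) : CNF := .con .top (.prp p) .top

def b2c : Base → CNF
  | .prp p => p2c p
  | .bd d => .con .top (.bd d) .top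

/-- Coercion of an ENF to a CNF. -/
def enf2cnf : ENF → CNF
  | .cnf c => c
  | .dnf d => b2c (.bd d)
/-- The structurally recursive exp-log normalization of a formula. -/
def enf : Formula → ENF
  | .prop p => .cnf (p2c p)
  | .disj f0 f1 => .dnf (nplus (enf f0) (enf f1))
  | .conj f0 f1 => distrib (enf f0) (enf f1)
  | .impl f0 f1 => .cnf (explogn (enf2cnf (enf f1)) (enf f0))
-- The intrinsically typed compact terms: HSc (at product/CNF type) and HSb (at base type).
mutual
inductive HSc : CNF → Type
  | tt : HSc .top
  | pair {c1 b c2} : HSb c1 b → HSc c2 → HSc (.con c1 b c2)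

inductive HSb : CNF → Base → Type
  | app {p c0 c1 c2} :
      HSc (explogn c1 (.cnf (ntimes c2 (.con c1 (.prp p) c0)))) →
      HSb (ntimes c2 (.con c1 (.prp p) c0)) (.prp p)
  | cas {d b c0 c1 c2 c3} :
      HSc (explogn c1 (.cnf (ntimes c2 (.con c1 (.bd d) c0)))) →
      HSc (explogn (explog0 b d) (.cnf (ntimes c3 (ntimes c2 (.con c1 (.bd d) c0))))) →
      HSb (ntimes c3 (ntimes c2 (.con c1 (.bd d) c0))) b
  | wkn {c0 c1 b1 b} : HSb c0 b → HSb (.con c1 b1 c0) b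
  | inl_two {c0 c1 c2} : HSc (explogn c1 (.cnf c0)) → HSb c0 (.bd (.two c1 c2))
  | inr_two {c0 c1 c2} : HSc (explogn c2 (.cnf c0)) → HSb c0 (.bd (.two c1 c2))
  | inl_dis {c0 c d} : HSc (explogn c (.cnf c0)) → HSb c0 (.bd (.dis c d))
  | inr_dis {c0 c d} : HSb c0 (.bd d) → HSb c0 (.bd (.dis c d))
end

/-! Normalization by evaluation. Contexts are CNFs, the newest hypotheses in front, and a
normal form is interpreted in a Kripke model over contexts ordered by prefix extension: a CNF
`b₁^c₁ × ⋯` denotes a product of Kripke function spaces, an atom denotes its neutral terms, and a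
DNF denotes a sum of CNF values under a cover monad of case trees whose scrutinees are neutral
terms of disjunctive type; at atomic type such a case tree is collapsed into `HSb.cas` terms.
Each rule of `ND` has a semantic counterpart of the rewriting (`nplus`, `distrib`, `explogn`)
that `enf` applies to the formulas, so a closed term evaluates to a value of `enf F` in the
empty context `.top`. Reification reads it back as a term of `HSc (explogn c (.cnf .top))`, and
`explogn c (.cnf .top) = c`. -/

theorem ntimes_top : ∀ c : CNF, ntimes c .top = c
  | .top => rfl
  | .con a b c => by simp [ntimes, ntimes_top c]

theorem ntimes_assoc : ∀ a b c : CNF, ntimes (ntimes a b) c = ntimes a (ntimes b c)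
  | .top, _, _ => rfl
  | .con x y z, b, c => by simp [ntimes, ntimes_assoc z b c]

theorem explogn_cnf_top : ∀ c : CNF, explogn c (.cnf .top) = c
  | .top => rfl
  | .con c1 b c2 => by
      simp [explogn, distrib1, explog1, ntimes, ntimes_top, explogn_cnf_top c2]

def CtxExt (Δ Γ : CNF) : Type := { w : CNF // ntimes w Γ = Δ }

namespace CtxExt

def refl (Γ : CNF) : CtxExt Γ Γ := ⟨.top, rfl⟩

def trans {Θ Δ Γ : CNF} (h₁ : CtxExt Θ Δ) (h₂ : CtxExt Δ Γ) : CtxExt Θ Γ :=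
  ⟨ntimes h₁.1 h₂.1, by rw [ntimes_assoc, h₂.2, h₁.2]⟩

def prepend (w Γ : CNF) : CtxExt (ntimes w Γ) Γ := ⟨w, rfl⟩

end CtxExt

def HSb.weakenPrefix {b : Base} : (w : CNF) → {Γ : CNF} → HSb Γ b → HSb (ntimes w Γ) b
  | .top, _, t => t
  | .con _ _ w', _, t => .wkn (weakenPrefix w' t)

def HSb.weaken {b : Base} {Δ Γ : CNF} (ext : CtxExt Δ Γ) (t : HSb Γ b) : HSb Δ b :=
  ext.2 ▸ t.weakenPrefix ext.1

/-! ### The cover monad -/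

inductive DNF.Disjunct : CNF → DNF → Type
  | two₁ {a b} : Disjunct a (.two a b)
  | two₂ {a b} : Disjunct b (.two a b)
  | head {a d} : Disjunct a (.dis a d)
  | tail {a c d} : Disjunct c d → Disjunct c (.dis a d)

def casBranches (b : Base) (Γ : CNF) :
    (d : DNF) → (∀ c, d.Disjunct c → HSb (ntimes c Γ) b) →
    HSc (explogn (explog0 b d) (.cnf Γ))
  | .two _ _, f => .pair (f _ .two₁) (.pair (f _ .two₂) .tt)
  | .dis _ d, f => .pair (f _ .head) (casBranches b Γ d (fun c m => f c (.tail m)))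

/-- A case tree: `split` cases on the hypothesis `c₁ → d` of the context, applied to `args`,
and continues in every extension of the context by a disjunct of `d`. -/
inductive Cover (X : CNF → Type) : CNF → Type
  | ret {Γ} : X Γ → Cover X Γ
  | split {Γ c0 c1 c2 c3 : CNF} {d : DNF}
      (eq : ntimes c3 (ntimes c2 (.con c1 (.bd d) c0)) = Γ)
      (args : HSc (explogn c1 (.cnf (ntimes c2 (.con c1 (.bd d) c0)))))
      (k : ∀ c, d.Disjunct c → ∀ Δ, CtxExt Δ Γ → Cover X (ntimes c Δ)) : Cover X Γ

namespace Cover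

variable {X Y : CNF → Type}

def weaken (weakenX : ∀ {Δ Γ}, CtxExt Δ Γ → X Γ → X Δ) {Γ Δ : CNF} (ext : CtxExt Δ Γ) :
    Cover X Γ → Cover X Δ
  | .ret x => .ret (weakenX ext x)
  | .split (c3 := c3) eq args k =>
      .split (c3 := ntimes ext.1 c3) (by rw [ntimes_assoc, eq, ext.2]) args
        (fun c m Θ ext' => k c m Θ (ext'.trans ext))

def bind {Γ : CNF} (t : Cover X Γ) (f : ∀ Δ, CtxExt Δ Γ → X Δ → Cover Y Δ) : Cover Y Γ :=
  match t with
  | .ret x => f Γ (.refl Γ) x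
  | .split eq args k =>
      .split eq args (fun c m Δ ext =>
        bind (k c m Δ ext) (fun Θ ext' y => f Θ (ext'.trans ((CtxExt.prepend c Δ).trans ext)) y))

def map {Γ : CNF} (f : ∀ {Δ}, X Δ → Y Δ) (t : Cover X Γ) : Cover Y Γ :=
  t.bind (fun _ _ x => .ret (f x))

def runHSb {b : Base} (f : ∀ Δ, X Δ → HSb Δ b) : {Γ : CNF} → Cover X Γ → HSb Γ b
  | _, .ret x => f _ x
  | Γ, .split (c0 := c0) (c1 := c1) (c2 := c2) (c3 := c3) (d := d) eq args k =>
      eq ▸ HSb.cas args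
        (casBranches b (ntimes c3 (ntimes c2 (.con c1 (.bd d) c0))) d
          (fun c m => eq.symm ▸ runHSb f (k c m Γ (.refl Γ))))

end Cover

/-! ### The Kripke model -/

mutual
def SemC : CNF → CNF → Type
  | .top, _ => PUnit
  | .con c1 b c2, Γ => (∀ Δ, CtxExt Δ Γ → SemC c1 Δ → SemB b Δ) × SemC c2 Γ
def SemB : Base → CNF → Type
  | .prp p, Γ => HSb Γ (.prp p)
  | .bd d, Γ => Cover (SemD d) Γ
def SemD : DNF → CNF → Type
  | .two a b, Γ => SemC a Γ ⊕ SemC b Γ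
  | .dis a d, Γ => SemC a Γ ⊕ SemD d Γ
end

def SemE : ENF → CNF → Type
  | .cnf c => SemC c
  | .dnf d => Cover (SemD d)

mutual
def SemC.weaken : (c : CNF) → {Δ Γ : CNF} → CtxExt Δ Γ → SemC c Γ → SemC c Δ
  | .top, _, _, _, _ => PUnit.unit
  | .con _ _ c2, _, _, ext, v =>
      ⟨fun Θ ext' => v.1 Θ (ext'.trans ext), SemC.weaken c2 ext v.2⟩
def SemB.weaken : (b : Base) → {Δ Γ : CNF} → CtxExt Δ Γ → SemB b Γ → SemB b Δ
  | .prp _, _, _, ext, v => HSb.weaken ext v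
  | .bd d, _, _, ext, v => Cover.weaken (SemD.weaken d) ext v
def SemD.weaken : (d : DNF) → {Δ Γ : CNF} → CtxExt Δ Γ → SemD d Γ → SemD d Δ
  | .two a b, _, _, ext, v => v.elim (.inl ∘ SemC.weaken a ext) (.inr ∘ SemC.weaken b ext)
  | .dis a d, _, _, ext, v => v.elim (.inl ∘ SemC.weaken a ext) (.inr ∘ SemD.weaken d ext)
end

def SemE.weaken : (e : ENF) → {Δ Γ : CNF} → CtxExt Δ Γ → SemE e Γ → SemE e Δ
  | .cnf c, _, _, ext, v => SemC.weaken c ext v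
  | .dnf d, _, _, ext, v => Cover.weaken (SemD.weaken d) ext v

def SemE.cast {e e' : ENF} (h : e = e') {Γ : CNF} (v : SemE e Γ) : SemE e' Γ := h ▸ v

def SemB.paste : (b : Base) → {Γ : CNF} → Cover (SemB b) Γ → SemB b Γ
  | .prp _, _, t => t.runHSb (fun _ x => x)
  | .bd _, _, t => t.bind (fun _ _ x => x)

def SemC.paste : (c : CNF) → {Γ : CNF} → Cover (SemC c) Γ → SemC c Γ
  | .top, _, _ => PUnit.unit
  | .con c1 b c2, _, t =>
    ⟨fun _ ext v => SemB.paste b ((t.weaken (SemC.weaken (.con c1 b c2)) ext).bind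
        (fun Θ ext' p => .ret (p.1 Θ (.refl Θ) (SemC.weaken c1 ext' v)))),
     SemC.paste c2 (t.map (·.2))⟩

def SemE.paste : (e : ENF) → {Γ : CNF} → Cover (SemE e) Γ → SemE e Γ
  | .cnf c, _, t => SemC.paste c t
  | .dnf _, _, t => t.bind (fun _ _ x => x)

mutual
def SemC.reify : (c : CNF) → {Γ : CNF} → SemC c Γ → HSc (explogn c (.cnf Γ))
  | .top, _, _ => .tt
  | .con c1 b c2, Γ, v =>
      .pair (SemB.reify b (v.1 (ntimes c1 Γ) (.prepend c1 Γ) (SemC.reflect c1 Γ)))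
        (SemC.reify c2 v.2)

/-- The hypotheses `c` in front of `Γ`, η-expanded into a value. -/
def SemC.reflect : (c : CNF) → (Γ : CNF) → SemC c (ntimes c Γ)
  | .top, _ => PUnit.unit
  | .con c1 (.prp p) c2, Γ =>
    ⟨fun _ ext v =>
      (ext.2 ▸ HSb.app (c2 := ext.1) (c0 := ntimes c2 Γ) (ext.2.symm ▸ SemC.reify c1 v) :
        SemB (.prp p) _),
     SemC.weaken c2 ⟨.con c1 (.prp p) .top, rfl⟩ (SemC.reflect c2 Γ)⟩
  | .con c1 (.bd d) c2, Γ =>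
    ⟨fun _ ext v =>
      (Cover.split (c3 := .top) (c2 := ext.1) (c0 := ntimes c2 Γ) ext.2
        (ext.2.symm ▸ SemC.reify c1 v) (fun c m Θ _ => .ret (SemD.reflect d c m Θ)) :
        SemB (.bd d) _),
     SemC.weaken c2 ⟨.con c1 (.bd d) .top, rfl⟩ (SemC.reflect c2 Γ)⟩

def SemD.reflect : (d : DNF) → ∀ c, d.Disjunct c → (Θ : CNF) → SemD d (ntimes c Θ)
  | .two a _, _, .two₁, Θ => .inl (SemC.reflect a Θ)
  | .two _ b, _, .two₂, Θ => .inr (SemC.reflect b Θ)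
  | .dis a _, _, .head, Θ => .inl (SemC.reflect a Θ)
  | .dis _ d, c, .tail m, Θ => .inr (SemD.reflect d c m Θ)

def SemB.reify : (b : Base) → {Γ : CNF} → SemB b Γ → HSb Γ b
  | .prp _, _, v => v
  | .bd d, _, v => v.runHSb (fun _ x => SemD.reify d x)

def SemD.reify : (d : DNF) → {Γ : CNF} → SemD d Γ → HSb Γ (.bd d)
  | .two a a', _, v => v.elim (.inl_two ∘ SemC.reify a) (.inr_two ∘ SemC.reify a')
  | .dis a d, _, v => v.elim (.inl_dis ∘ SemC.reify a) (.inr_dis ∘ SemD.reify d)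
end

/-! ### Semantics of the normal-form operations -/

def SemC.unappend : (a : CNF) → {b Γ : CNF} → SemC (ntimes a b) Γ → SemC a Γ × SemC b Γ
  | .top, _, _, v => (PUnit.unit, v)
  | .con _ _ a2, _, _, v =>
      let pq := SemC.unappend a2 v.2
      (⟨v.1, pq.1⟩, pq.2)

def SemC.append : (a : CNF) → {b Γ : CNF} → SemC a Γ → SemC b Γ → SemC (ntimes a b) Γ
  | .top, _, _, _, w => w
  | .con _ _ a2, _, _, v, w => ⟨v.1, SemC.append a2 v.2 w⟩

def SemE.toEnf2cnf : (e : ENF) → {Γ : CNF} → SemE e Γ → SemC (enf2cnf e) Γ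
  | .cnf _, _, v => v
  | .dnf d, _, v => ⟨fun _ ext _ => Cover.weaken (SemD.weaken d) ext v, PUnit.unit⟩

def SemE.ofEnf2cnf : (e : ENF) → {Γ : CNF} → SemC (enf2cnf e) Γ → SemE e Γ
  | .cnf _, _, v => v
  | .dnf _, Γ, v => v.1 Γ (.refl Γ) PUnit.unit

def SemD.inlNplus1 : (d : DNF) → (e : ENF) → {Γ : CNF} → SemD d Γ → SemD (nplus1 d e) Γ
  | .two _ _, .cnf _, _, v => v.elim .inl (.inr ∘ .inl)
  | .two _ _, .dnf _, _, v => v.elim .inl (.inr ∘ .inl)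
  | .dis _ d, e, _, v => v.elim .inl (.inr ∘ SemD.inlNplus1 d e)

def SemD.inrNplus1Cnf : (d : DNF) → (c : CNF) → {Γ : CNF} → SemC c Γ →
    SemD (nplus1 d (.cnf c)) Γ
  | .two _ _, _, _, v => .inr (.inr v)
  | .dis _ d, c, _, v => .inr (SemD.inrNplus1Cnf d c v)

def SemD.inrNplus1Dnf : (d d' : DNF) → {Γ : CNF} → SemD d' Γ → SemD (nplus1 d (.dnf d')) Γ
  | .two _ _, _, _, v => .inr (.inr v)
  | .dis _ d, d', _, v => .inr (SemD.inrNplus1Dnf d d' v)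

def SemE.inlNplus : (e₁ e₂ : ENF) → {Γ : CNF} → SemE e₁ Γ → Cover (SemD (nplus e₁ e₂)) Γ
  | .cnf _, .cnf _, _, v => .ret (.inl v)
  | .cnf _, .dnf _, _, v => .ret (.inl v)
  | .dnf d, e₂, _, v => v.map (SemD.inlNplus1 d e₂)

def SemE.inrNplus : (e₁ e₂ : ENF) → {Γ : CNF} → SemE e₂ Γ → Cover (SemD (nplus e₁ e₂)) Γ
  | .cnf _, .cnf _, _, v => .ret (.inr v)
  | .cnf c, .dnf d, _, v => v.map (fun x => (.inr x : SemD (.dis c d) _))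
  | .dnf d, .cnf c, _, v => .ret (SemD.inrNplus1Cnf d c v)
  | .dnf d, .dnf d', _, v => v.map (SemD.inrNplus1Dnf d d')

def SemD.caseNplus1 : (d : DNF) → (e : ENF) → {Γ : CNF} → SemD (nplus1 d e) Γ →
    SemD d Γ ⊕ SemE e Γ
  | .two _ _, .cnf _, _, v => match v with
     | .inl x => .inl (.inl x) | .inr (.inl x) => .inl (.inr x) | .inr (.inr x) => .inr x
  | .two _ _, .dnf _, _, v => match v with
     | .inl x => .inl (.inl x) | .inr (.inl x) => .inl (.inr x) | .inr (.inr x) => .inr (.ret x)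
  | .dis _ d, e, _, v => match v with
     | .inl x => .inl (.inl x)
     | .inr x => (SemD.caseNplus1 d e x).elim (.inl ∘ .inr) .inr

def SemD.caseNplus : (e₁ e₂ : ENF) → {Γ : CNF} → SemD (nplus e₁ e₂) Γ → SemE e₁ Γ ⊕ SemE e₂ Γ
  | .cnf _, .cnf _, _, v => v
  | .cnf _, .dnf _, _, v => v.elim .inl (.inr ∘ .ret)
  | .dnf d, e₂, _, v => (SemD.caseNplus1 d e₂ v).elim (.inl ∘ .ret) .inr

def distrib0DNF : CNF → DNF → DNF
  | c, .two c0 c1 => .two (ntimes c c0) (ntimes c c1)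
  | c, .dis c0 d0 => .dis (ntimes c c0) (distrib0DNF c d0)

theorem distrib0_eq_dnf : ∀ (c : CNF) (d : DNF), distrib0 c d = .dnf (distrib0DNF c d)
  | _, .two _ _ => rfl
  | c, .dis _ d => by simp only [distrib0, distrib0DNF, distrib0_eq_dnf c d]

def distribnDNF : DNF → ENF → DNF
  | .two c c0, e => nplus (distrib1 c e) (distrib1 c0 e)
  | .dis c d, e => nplus (distrib1 c e) (.dnf (distribnDNF d e))

theorem distribn_eq_dnf : ∀ (d : DNF) (e : ENF), distribn d e = .dnf (distribnDNF d e)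
  | .two _ _, _ => rfl
  | .dis _ d, e => by simp only [distribn, distribnDNF, distribn_eq_dnf d e, nplus]

def SemD.pairDistrib0 : (a : CNF) → (d : DNF) → {Γ : CNF} → SemC a Γ → SemD d Γ →
    SemD (distrib0DNF a d) Γ
  | a, .two _ _, _, va, v => v.elim (.inl ∘ SemC.append a va) (.inr ∘ SemC.append a va)
  | a, .dis _ d, _, va, v => v.elim (.inl ∘ SemC.append a va) (.inr ∘ SemD.pairDistrib0 a d va)

def SemD.unpairDistrib0 : (a : CNF) → (d : DNF) → {Γ : CNF} → SemD (distrib0DNF a d) Γ →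
    SemC a Γ × SemD d Γ
  | a, .two _ _, _, v =>
      v.elim (Prod.map id .inl ∘ SemC.unappend a) (Prod.map id .inr ∘ SemC.unappend a)
  | a, .dis _ d, _, v =>
      v.elim (Prod.map id .inl ∘ SemC.unappend a) (Prod.map id .inr ∘ SemD.unpairDistrib0 a d)

def SemE.pairDistrib1 : (a : CNF) → (e : ENF) → {Γ : CNF} → SemC a Γ → SemE e Γ →
    SemE (distrib1 a e) Γ
  | a, .cnf _, _, va, v => SemC.append a va v
  | a, .dnf d, _, va, v =>
      SemE.cast (distrib0_eq_dnf a d).symm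
        (v.bind (fun _ ext x => .ret (SemD.pairDistrib0 a d (SemC.weaken a ext va) x)))

def SemE.unpairDistrib1 : (a : CNF) → (e : ENF) → {Γ : CNF} → SemE (distrib1 a e) Γ →
    SemC a Γ × SemE e Γ
  | a, .cnf _, _, v => SemC.unappend a v
  | a, .dnf d, Γ, v =>
      let w : Cover (SemD (distrib0DNF a d)) Γ := SemE.cast (distrib0_eq_dnf a d) v
      (SemC.paste a (w.map fun x => (SemD.unpairDistrib0 a d x).1),
        w.map fun x => (SemD.unpairDistrib0 a d x).2)

def SemD.pairDistribn : (d : DNF) → (e : ENF) → {Γ : CNF} → SemD d Γ → SemE e Γ →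
    Cover (SemD (distribnDNF d e)) Γ
  | .two c c0, e, _, v, ve => v.elim
      (fun x => SemE.inlNplus (distrib1 c e) (distrib1 c0 e) (SemE.pairDistrib1 c e x ve))
      (fun x => SemE.inrNplus (distrib1 c e) (distrib1 c0 e) (SemE.pairDistrib1 c0 e x ve))
  | .dis c d, e, _, v, ve => v.elim
      (fun x => SemE.inlNplus (distrib1 c e) (.dnf (distribnDNF d e)) (SemE.pairDistrib1 c e x ve))
      (fun x => SemE.inrNplus (distrib1 c e) (.dnf (distribnDNF d e)) (SemD.pairDistribn d e x ve))

def SemD.unpairDistribn : (d : DNF) → (e : ENF) → {Γ : CNF} → SemD (distribnDNF d e) Γ →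
    Cover (fun Θ => SemD d Θ × SemE e Θ) Γ
  | .two c c0, e, _, v =>
      (SemD.caseNplus (distrib1 c e) (distrib1 c0 e) v).elim
        (.ret ∘ Prod.map .inl id ∘ SemE.unpairDistrib1 c e)
        (.ret ∘ Prod.map .inr id ∘ SemE.unpairDistrib1 c0 e)
  | .dis c d, e, _, v =>
      (SemD.caseNplus (distrib1 c e) (.dnf (distribnDNF d e)) v).elim
        (.ret ∘ Prod.map .inl id ∘ SemE.unpairDistrib1 c e)
        (fun x => x.bind (fun _ _ y => (SemD.unpairDistribn d e y).map (Prod.map .inr id)))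

def SemE.pairDistrib : (e₁ e₂ : ENF) → {Γ : CNF} → SemE e₁ Γ → SemE e₂ Γ → SemE (distrib e₁ e₂) Γ
  | .cnf a, e₂, _, v, w => SemE.pairDistrib1 a e₂ v w
  | .dnf d, e₂, _, v, w =>
      SemE.cast (distribn_eq_dnf d e₂).symm
        (v.bind (fun _ ext x => SemD.pairDistribn d e₂ x (SemE.weaken e₂ ext w)))

def SemE.unpairDistrib : (e₁ e₂ : ENF) → {Γ : CNF} → SemE (distrib e₁ e₂) Γ →
    SemE e₁ Γ × SemE e₂ Γ
  | .cnf a, e₂, _, v => SemE.unpairDistrib1 a e₂ v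
  | .dnf d, e₂, Γ, v =>
      let w : Cover (fun Θ => SemD d Θ × SemE e₂ Θ) Γ :=
        (SemE.cast (distribn_eq_dnf d e₂) v : Cover (SemD (distribnDNF d e₂)) Γ).bind
          (fun _ _ x => SemD.unpairDistribn d e₂ x)
      (w.map (·.1), SemE.paste e₂ (w.map (·.2)))

def SemC.explog0Lam : (b : Base) → (d : DNF) → {Γ : CNF} →
    (∀ Δ, CtxExt Δ Γ → SemD d Δ → SemB b Δ) → SemC (explog0 b d) Γ
  | _, .two _ _, _, f =>
      ⟨fun Δ ext v => f Δ ext (.inl v), ⟨fun Δ ext v => f Δ ext (.inr v), PUnit.unit⟩⟩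
  | b, .dis _ d, _, f =>
      ⟨fun Δ ext v => f Δ ext (.inl v), SemC.explog0Lam b d (fun Δ ext v => f Δ ext (.inr v))⟩

def SemC.explog1Lam : (b : Base) → (e : ENF) → {Γ : CNF} →
    (∀ Δ, CtxExt Δ Γ → SemE e Δ → SemB b Δ) → SemC (explog1 b e) Γ
  | _, .cnf _, _, f => ⟨f, PUnit.unit⟩
  | b, .dnf d, _, f => SemC.explog0Lam b d (fun Δ ext v => f Δ ext (.ret v))

def SemC.explog0App : (b : Base) → (d : DNF) → {Γ : CNF} → SemC (explog0 b d) Γ →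
    ∀ Δ, CtxExt Δ Γ → SemD d Δ → SemB b Δ
  | _, .two _ _, _, f, Δ, ext, v => v.elim (f.1 Δ ext) (f.2.1 Δ ext)
  | b, .dis _ d, _, f, Δ, ext, v => v.elim (f.1 Δ ext) (SemC.explog0App b d f.2 Δ ext)

def SemC.explog1App : (b : Base) → (e : ENF) → {Γ : CNF} → SemC (explog1 b e) Γ →
    ∀ Δ, CtxExt Δ Γ → SemE e Δ → SemB b Δ
  | _, .cnf _, _, f, Δ, ext, v => f.1 Δ ext v
  | b, .dnf d, _, f, _, ext, v =>
      SemB.paste b (v.bind (fun Θ ext' x => .ret (SemC.explog0App b d f Θ (ext'.trans ext) x)))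

def SemC.explognLam : (c : CNF) → (e : ENF) → {Γ : CNF} →
    (∀ Δ, CtxExt Δ Γ → SemE e Δ → SemC c Δ) → SemC (explogn c e) Γ
  | .top, _, _, _ => PUnit.unit
  | .con c1 b c2, e, _, f =>
      SemC.append (explog1 b (distrib1 c1 e))
        (SemC.explog1Lam b (distrib1 c1 e) (fun Δ ext v =>
          let (v₁, ve) := SemE.unpairDistrib1 c1 e v
          (f Δ ext ve).1 Δ (.refl Δ) v₁))
        (SemC.explognLam c2 e (fun Δ ext v => (f Δ ext v).2))

def SemC.explognApp : (c : CNF) → (e : ENF) → {Γ : CNF} → SemC (explogn c e) Γ →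
    ∀ Δ, CtxExt Δ Γ → SemE e Δ → SemC c Δ
  | .top, _, _, _, _, _, _ => PUnit.unit
  | .con c1 b c2, e, _, f, Δ, ext, ve =>
      let f' := SemC.unappend (explog1 b (distrib1 c1 e)) f
      ⟨fun Θ ext' v =>
         SemC.explog1App b (distrib1 c1 e) f'.1 Θ (ext'.trans ext)
           (SemE.pairDistrib1 c1 e v (SemE.weaken e ext' ve)),
       SemC.explognApp c2 e f'.2 Δ ext ve⟩

/-! ### Evaluation -/

def Env : List Formula → CNF → Type
  | [], _ => PUnit
  | A :: L, Γ => SemE (enf A) Γ × Env L Γ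

def Env.weaken : (L : List Formula) → {Δ Γ : CNF} → CtxExt Δ Γ → Env L Γ → Env L Δ
  | [], _, _, _, _ => PUnit.unit
  | A :: L, _, _, ext, ρ => (SemE.weaken (enf A) ext ρ.1, Env.weaken L ext ρ.2)

def eval : {L : List Formula} → {F : Formula} → ND L F → {Γ : CNF} → Env L Γ → SemE (enf F) Γ
  | _, _, .hyp, _, ρ => ρ.1
  | _, _, .wkn t, _, ρ => eval t ρ.2
  | _, _, .lam (A := A) (B := B) t, _, ρ =>
      SemC.explognLam (enf2cnf (enf B)) (enf A)
        (fun _ ext a => SemE.toEnf2cnf (enf B) (eval t (a, Env.weaken _ ext ρ)))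
  | _, _, .app (A := A) (B := B) t u, Γ, ρ =>
      SemE.ofEnf2cnf (enf B)
        (SemC.explognApp (enf2cnf (enf B)) (enf A) (eval t ρ) Γ (.refl Γ) (eval u ρ))
  | _, _, .pair t u, _, ρ => SemE.pairDistrib _ _ (eval t ρ) (eval u ρ)
  | _, _, .fst t, _, ρ => (SemE.unpairDistrib _ _ (eval t ρ)).1
  | _, _, .snd t, _, ρ => (SemE.unpairDistrib _ _ (eval t ρ)).2
  | _, _, .inl (A := A) (B := B) t, _, ρ => SemE.inlNplus (enf A) (enf B) (eval t ρ)
  | _, _, .inr (A := A) (B := B) t, _, ρ => SemE.inrNplus (enf A) (enf B) (eval t ρ)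
  | _, _, .cas (A := A) (B := B) (C := C) t u₁ u₂, _, ρ =>
      SemE.paste (enf C) ((eval t ρ).bind (fun _ ext x =>
        match SemD.caseNplus (enf A) (enf B) x with
        | .inl a => .ret (eval u₁ (a, Env.weaken _ ext ρ))
        | .inr b => .ret (eval u₂ (b, Env.weaken _ ext ρ))))

def nbe (F : Formula) (t : ND [] F) : HSc (enf2cnf (enf F)) :=
  explogn_cnf_top (enf2cnf (enf F)) ▸
    SemC.reify (enf2cnf (enf F)) (SemE.toEnf2cnf (enf F) (eval t (Γ := .top) PUnit.unit))

/-- The normalizing converter `nbe`: every closed lambda term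
of type `F` can be mapped to a compact term at the exp-log normal form of `F`. -/
theorem nbe_exists :
    Nonempty (∀ F : Formula, ND [] F → HSc (enf2cnf (enf F))) :=
  ⟨nbe⟩

end ExpLog
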